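/- arXiv:1301.6070 — 3 statements merged into one kernel-verified Lean document; each statement's English description precedes it below -/
import Mathlib

section
/- Let γ : X → ℂ be a generalized path. For any x, t ∈ [0,1], μ ∈ (0,1], and any ε > 0, there are only finitely many connected components C of the sets γ⁻¹(S^{x,t,μ}_j) (as j ranges over ℤ) with ‖γ(C)‖_t ≥ ε. -/
open Set MeasureTheory

noncomputable section

/-- The closed horizontal strip `S_j = {a + ib : a ∈ ℝ, b ∈ [j, j+1]} ⊆ ℂ`. -/
def hStrip (j : ℤ) : Set ℂ := {z : ℂ | (j : ℝ) ≤ z.im ∧ z.im ≤ (j : ℝ) + 1}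

/-- The strip `S^{x,t,μ}_j = μ·e^{tπi}·(S_j + ix)`. -/
def Strip (x t μ : ℝ) (j : ℤ) : Set ℂ :=
  (fun z : ℂ => (μ : ℂ) * Complex.exp ((t : ℂ) * (Real.pi : ℂ) * Complex.I) *
    (z + (x : ℂ) * Complex.I)) '' hStrip j

/-- The orthogonal projection of `ℂ` onto the line `{r·e^{(t+1/2)πi} : r ∈ ℝ}`,
composed with the natural isometric identification of this line with `ℝ`
(so that Euclidean diameters of subsets are preserved). -/
def projPerp (t : ℝ) (z : ℂ) : ℝ :=
  (z * Complex.exp (-(((t : ℂ) + 1 / 2) * (Real.pi : ℂ) * Complex.I))).re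

/-- `‖A‖_t`, the (Euclidean) diameter of the orthogonal projection `proj⊥_t(A)`. -/
def normT (t : ℝ) (A : Set ℂ) : ℝ := Metric.diam (projPerp t '' A)

/-- The collection of all connected components of the sets `γ⁻¹(S^{x,t,μ}_j)`, `j ∈ ℤ`. -/
def stripComponents {X : Type*} [TopologicalSpace X] (γ : X → ℂ) (x t μ : ℝ) : Set (Set X) :=
  {C | ∃ j : ℤ, ∃ p ∈ γ ⁻¹' Strip x t μ j, C = connectedComponentIn (γ ⁻¹' Strip x t μ j) p}

/-- The components whose image under `proj⊥_t ∘ γ` is non-degenerate. -/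
def ndComponents {X : Type*} [TopologicalSpace X] (γ : X → ℂ) (x t μ : ℝ) : Set (Set X) :=
  {C | C ∈ stripComponents γ x t μ ∧ (projPerp t '' (γ '' C)).Nontrivial}

/-- `L^{x,t,μ}(γ) = ∑ₙ ‖γ(C_n)‖_t / 2ⁿ`, where `⟨C_n⟩ₙ` enumerates the components of
the sets `γ⁻¹(S^{x,t,μ}_j)` (`j ∈ ℤ`) with non-degenerate projection, in non-increasing
order of `‖γ(C_n)‖_t`.  Since the weights `2⁻ⁿ` are strictly decreasing, this sum is equal
to the supremum, over all finite injective enumerations `e` of such components, of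
`∑ₙ ‖γ(e n)‖_t / 2ⁿ`; we take this supremum as the formal definition. -/
def Lfn {X : Type*} [TopologicalSpace X] (γ : X → ℂ) (x t μ : ℝ) : ℝ :=
  sSup {r : ℝ | ∃ (N : ℕ) (e : Fin N → Set X), Function.Injective e ∧
    (∀ n, e n ∈ ndComponents γ x t μ) ∧
    r = ∑ n : Fin N, normT t (γ '' e n) / (2 : ℝ) ^ (n : ℕ)}

/-- `len(γ) = ∫₀¹∫₀¹∫₀¹ L^{x,t,μ}(γ) dx dt dμ`. -/
def len {X : Type*} [TopologicalSpace X] (γ : X → ℂ) : ℝ :=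
  ∫ μ in (0:ℝ)..1, ∫ t in (0:ℝ)..1, ∫ x in (0:ℝ)..1, Lfn γ x t μ

/-! With `f = proj⊥_t ∘ γ`, the preimages `γ⁻¹(S^{x,t,μ}_j)` are the sets `f⁻¹[a_j, a_j + μ]`,
`a_j = μ(j + x)`. If a component `C` has `‖γ(C)‖_t ≥ ε`, then `f(C)` is an interval of length `≥ ε`, so its interior
contains a point `v` of a fixed finite `ε/2`-net of the compact set `f(X)`. Such a `v` lies in the
interior of at most one strip, and by compactness and local connectedness the level set `f⁻¹{v}`,
which lies in the interior of that strip's preimage, meets only finitely many of its components. -/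

theorem IsCompact.finite_image_connectedComponentIn {X : Type*} [TopologicalSpace X]
    [LocallyConnectedSpace X] {K S : Set X} (hK : IsCompact K) (hKS : K ⊆ interior S) :
    (connectedComponentIn S '' K).Finite := by
  have hU : ∀ p ∈ K, ∃ U, U ⊆ interior S ∧ IsOpen U ∧ p ∈ U ∧ IsConnected U := fun p hp =>
    locallyConnectedSpace_iff_subsets_isOpen_isConnected.mp ‹_› p _
      (isOpen_interior.mem_nhds (hKS hp))
  choose U hUS hUo hpU hUc using hU
  obtain ⟨F, hF⟩ := hK.elim_nhds_subcover' U fun p hp => (hUo p hp).mem_nhds (hpU p hp)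
  refine (F.finite_toSet.image fun p : K => connectedComponentIn S (p : X)).subset ?_
  rintro _ ⟨q, hq, rfl⟩
  obtain ⟨p, hpF, hqU⟩ := mem_iUnion₂.mp (hF hq)
  have hU_sub : U p p.2 ⊆ connectedComponentIn S p :=
    (hUc _ _).isPreconnected.subset_connectedComponentIn (hpU _ _)
      ((hUS _ _).trans interior_subset)
  exact ⟨p, hpF, connectedComponentIn_eq (hU_sub hqU)⟩

theorem Continuous.finite_image_connectedComponentIn_preimage_Icc {X : Type*}
    [TopologicalSpace X] [CompactSpace X] [LocallyConnectedSpace X] {f : X → ℝ} (hf : Continuous f)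
    {a b v : ℝ} (hv : v ∈ Ioo a b) :
    (connectedComponentIn (f ⁻¹' Icc a b) '' (f ⁻¹' {v})).Finite := by
  refine (isClosed_singleton.preimage hf).isCompact.finite_image_connectedComponentIn ?_
  calc f ⁻¹' {v} ⊆ f ⁻¹' Ioo a b := preimage_mono (singleton_subset_iff.mpr hv)
    _ ⊆ interior (f ⁻¹' Icc a b) :=
      interior_maximal (preimage_mono Ioo_subset_Icc_self) (isOpen_Ioo.preimage hf)

theorem TotallyBounded.exists_finite_mem_Ioo_of_le_diam {B : Set ℝ} (hB : TotallyBounded B)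
    {ε : ℝ} (hε : 0 < ε) :
    ∃ V : Set ℝ, V.Finite ∧ ∀ s ⊆ B, IsPreconnected s → Bornology.IsBounded s →
      ε ≤ Metric.diam s → ∃ v ∈ V, v ∈ s ∧ v ∈ Ioo (sInf s) (sSup s) := by
  obtain ⟨V, -, hVfin, hBV⟩ := Metric.finite_approx_of_totallyBounded hB (ε / 2) (half_pos hε)
  refine ⟨V, hVfin, fun s hsB hs hsb hdiam => ?_⟩
  obtain rfl | hne := s.eq_empty_or_nonempty
  · simp only [Metric.diam_empty] at hdiam
    linarith
  rw [Real.diam_eq hsb] at hdiam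
  have hmid_sub : Ioo (sInf s) (sSup s) ⊆ s :=
    IsConnected.Ioo_csInf_csSup_subset ⟨hne, hs⟩ hsb.bddBelow hsb.bddAbove
  have hmid : (sInf s + sSup s) / 2 ∈ s := hmid_sub ⟨by linarith, by linarith⟩
  obtain ⟨v, hv, hmid_v⟩ := mem_iUnion₂.mp (hBV (hsB hmid))
  rw [Metric.mem_ball, Real.dist_eq, abs_lt] at hmid_v
  exact ⟨v, hv, hmid_sub ⟨by linarith, by linarith⟩, by linarith, by linarith⟩

open Complex in
theorem projPerp_mul_exp_mul_add (x t μ : ℝ) (w : ℂ) :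
    projPerp t ((μ : ℂ) * exp ((t : ℂ) * (Real.pi : ℂ) * I) * (w + (x : ℂ) * I)) =
      μ * (w.im + x) := by
  have hrot : exp ((t : ℂ) * (Real.pi : ℂ) * I) *
      exp (-(((t : ℂ) + 1 / 2) * (Real.pi : ℂ) * I)) = -I := by
    rw [← exp_add, ← exp_neg_pi_div_two_mul_I]
    ring_nf
  rw [projPerp, show ∀ a b c d : ℂ, a * b * c * d = a * c * (b * d) from fun _ _ _ _ => by ring,
    hrot]
  simp [mul_re, mul_im]

theorem Strip_eq_preimage_projPerp {x t μ : ℝ} (hμ : 0 < μ) (j : ℤ) :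
    Strip x t μ j = projPerp t ⁻¹' Icc (μ * (j + x)) (μ * (j + 1 + x)) := by
  set c : ℂ := (μ : ℂ) * Complex.exp ((t : ℂ) * (Real.pi : ℂ) * Complex.I)
  have hc : c ≠ 0 := mul_ne_zero (by exact_mod_cast hμ.ne') (Complex.exp_ne_zero _)
  have hsurj : Function.Surjective fun z : ℂ => c * (z + (x : ℂ) * Complex.I) := fun y =>
    ⟨y / c - (x : ℂ) * Complex.I, by field_simp; ring⟩
  have hS : hStrip j = (fun z : ℂ => c * (z + (x : ℂ) * Complex.I)) ⁻¹'
      (projPerp t ⁻¹' Icc (μ * (j + x)) (μ * (j + 1 + x))) := by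
    ext w
    simp only [hStrip, c, mem_ofPred_eq, mem_preimage, projPerp_mul_exp_mul_add, mem_Icc,
      mul_le_mul_iff_right₀ hμ]
    constructor <;> rintro ⟨h₁, h₂⟩ <;> constructor <;> linarith
  rw [Strip, hS, image_preimage_eq _ hsurj]

theorem Int.floor_div_sub_eq_of_mem_Ioo {μ x v : ℝ} (hμ : 0 < μ) {j : ℤ}
    (hv : v ∈ Ioo (μ * (j + x)) (μ * (j + 1 + x))) : ⌊v / μ - x⌋ = j := by
  rw [Int.floor_eq_iff, le_sub_iff_add_le, le_div_iff₀ hμ, sub_lt_iff_lt_add, div_lt_iff₀ hμ]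
  constructor <;> linarith [hv.1, hv.2]

theorem finitely_many_components_with_large_projection_general
    {X : Type*} [MetricSpace X] [CompactSpace X] [LocallyConnectedSpace X]
    (γ : X → ℂ) (hγ : Continuous γ)
    (x t μ : ℝ) (hμ : μ ∈ Ioc (0:ℝ) 1)
    (ε : ℝ) (hε : 0 < ε) :
    {C : Set X | C ∈ stripComponents γ x t μ ∧ ε ≤ normT t (γ '' C)}.Finite := by
  set f : X → ℝ := projPerp t ∘ γ
  have hf : Continuous f := by unfold f projPerp; fun_prop
  have hpre (j : ℤ) : γ ⁻¹' Strip x t μ j = f ⁻¹' Icc (μ * (j + x)) (μ * (j + 1 + x)) := by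
    rw [Strip_eq_preimage_projPerp hμ.1, preimage_comp]
  obtain ⟨V, hVfin, hV⟩ := (isCompact_range hf).totallyBounded.exists_finite_mem_Ioo_of_le_diam hε
  have hfin (v : ℝ) : {j : ℤ | v ∈ Ioo (μ * (j + x)) (μ * (j + 1 + x))}.Finite :=
    (finite_singleton ⌊v / μ - x⌋).subset fun j hj =>
      (Int.floor_div_sub_eq_of_mem_Ioo hμ.1 hj).symm
  refine (hVfin.biUnion fun v _ => (hfin v).biUnion fun j hj =>
    hf.finite_image_connectedComponentIn_preimage_Icc hj).subset ?_
  rintro _ ⟨⟨j, p, -, rfl⟩, hCε⟩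
  rw [hpre] at hCε ⊢
  set C := connectedComponentIn (f ⁻¹' Icc (μ * (j + x)) (μ * (j + 1 + x))) p
  have hCI : f '' C ⊆ Icc (μ * (j + x)) (μ * (j + 1 + x)) :=
    image_subset_iff.mpr (connectedComponentIn_subset _ _)
  obtain ⟨v, hvV, ⟨q, hqC, rfl⟩, hv⟩ := hV (f '' C) (image_subset_range f C)
    (isPreconnected_connectedComponentIn.image f hf.continuousOn)
    ((Metric.isBounded_Icc _ _).subset hCI)
    (by rwa [normT, image_image] at hCε)
  have hne : (f '' C).Nonempty := ⟨f q, mem_image_of_mem f hqC⟩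
  have hvj : f q ∈ Ioo (μ * (j + x)) (μ * (j + 1 + x)) :=
    ⟨(le_csInf hne fun y hy => (hCI hy).1).trans_lt hv.1,
      hv.2.trans_le (csSup_le hne fun y hy => (hCI hy).2)⟩
  exact mem_biUnion hvV (mem_biUnion hvj ⟨q, rfl, (connectedComponentIn_eq hqC).symm⟩)

/-- **Lemma 2.1.** Let `γ : X → ℂ` be a generalized path (a continuous map from a locally
connected continuum, i.e. a compact connected locally connected metric space, to `ℂ`).
For any `x, t ∈ [0,1]`, `μ ∈ (0,1]` and any `ε > 0`, there are only finitely many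
connected components `C` of the sets `γ⁻¹(S^{x,t,μ}_j)` (`j ∈ ℤ`) with `‖γ(C)‖_t ≥ ε`. -/
theorem finitely_many_components_with_large_projection
    {X : Type*} [MetricSpace X] [CompactSpace X] [ConnectedSpace X] [LocallyConnectedSpace X]
    (γ : X → ℂ) (hγ : Continuous γ)
    (x t μ : ℝ) (hx : x ∈ Icc (0:ℝ) 1) (ht : t ∈ Icc (0:ℝ) 1) (hμ : μ ∈ Ioc (0:ℝ) 1)
    (ε : ℝ) (hε : 0 < ε) :
    {C : Set X | C ∈ stripComponents γ x t μ ∧ ε ≤ normT t (γ '' C)}.Finite :=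
  finitely_many_components_with_large_projection_general γ hγ x t μ hμ ε hε
end
end

section
/- Let γ : X → ℂ be a generalized path, and let C be a connected component of γ⁻¹(S^{x,t,μ}_j) for some x, t ∈ [0,1], μ ∈ (0,1], j ∈ ℤ, such that proj⊥_t(γ(C)) is non-degenerate. Then for every ε > 0 there exists a subcontinuum D ⊆ C such that γ(D) is contained in the interior of S^{x,t,μ}_j and ‖γ(D)‖_t ≥ ‖γ(C)‖_t − ε. -/
open Set MeasureTheory

noncomputable section

/-!
In the direction orthogonal to the strip, `S^{x,t,μ}_j` is the preimage under `proj⊥_t` of a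
closed interval, so everything reduces to the real function `f = proj⊥_t ∘ γ` on the continuum
`C`, where `f(C) = [c, d]` with `c < d`. For small `δ > 0` there is a subcontinuum `D ⊆ C` with
`f(D) = [c + δ, d - δ]` (boundary bumping): otherwise no component of `C ∩ f⁻¹[c + δ, d - δ]`
meets both end levels, and since components and quasi-components agree in compact Hausdorff
spaces, some clopen subset of `C ∩ f⁻¹[c + δ, d - δ]` contains the level `d - δ` and misses the
level `c + δ`; together with `{f ≥ d - δ}` it would disconnect `C`.
-/

theorem exists_isClopen_of_disjoint_connectedComponent {α : Type*} [TopologicalSpace α]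
    [CompactSpace α] [T2Space α] {F G : Set α} (hF : IsClosed F) (hG : IsClosed G)
    (h : ∀ x ∈ F, Disjoint (connectedComponent x) G) :
    ∃ W : Set α, IsClopen W ∧ F ⊆ W ∧ Disjoint W G := by
  set π : α → ConnectedComponents α := ConnectedComponents.mk
  have hπ : Continuous π := ConnectedComponents.continuous_coe
  have hFG : π '' F ⊆ (π '' G)ᶜ := by
    rintro _ ⟨x, hx, rfl⟩ ⟨y, hy, hxy⟩
    exact disjoint_left.mp (h x hx) (ConnectedComponents.coe_eq_coe'.mp hxy) hy
  obtain ⟨W, hW, hFW, hWG⟩ := exists_clopen_of_closed_subset_open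
    (hF.isCompact.image hπ).isClosed (hG.isCompact.image hπ).isClosed.isOpen_compl hFG
  exact ⟨π ⁻¹' W, hW.preimage hπ, image_subset_iff.mp hFW,
    disjoint_left.mpr fun y hy hyG => hWG hy ⟨y, hyG, rfl⟩⟩

theorem exists_isConnected_image_eq_Icc {α : Type*} [TopologicalSpace α] [CompactSpace α]
    [T2Space α] [PreconnectedSpace α] {f : α → ℝ} (hf : Continuous f) {u v : ℝ} (huv : u < v)
    {p q : α} (hp : f p < u) (hq : v < f q) :
    ∃ D : Set α, IsCompact D ∧ IsConnected D ∧ f '' D = Icc u v := by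
  set A := f ⁻¹' Icc u v
  have hA : IsClosed A := isClosed_Icc.preimage hf
  have : CompactSpace A := isCompact_iff_compactSpace.mp hA.isCompact
  have hfA : Continuous fun z : A => f z := hf.comp continuous_subtype_val
  set Fu : Set A := {z | f z = u}
  set Fv : Set A := {z | f z = v}
  by_cases hbridge : ∃ z ∈ Fv, ¬Disjoint (connectedComponent z) Fu
  · obtain ⟨z, hzv, hzu⟩ := hbridge
    obtain ⟨w, hwz, hwu⟩ := not_disjoint_iff.mp hzu
    have hD : IsConnected (Subtype.val '' connectedComponent z) :=
      isConnected_connectedComponent.image _ continuous_subtype_val.continuousOn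
    refine ⟨_, isClosed_connectedComponent.isCompact.image continuous_subtype_val, hD,
      subset_antisymm ?_ ?_⟩
    · rintro _ ⟨_, ⟨y, -, rfl⟩, rfl⟩
      exact y.2
    · exact (hD.image f hf.continuousOn).isPreconnected.Icc_subset
        ⟨w, ⟨w, hwz, rfl⟩, hwu⟩ ⟨z, ⟨z, mem_connectedComponent, rfl⟩, hzv⟩
  push Not at hbridge
  obtain ⟨W, hW, hFvW, hWFu⟩ := exists_isClopen_of_disjoint_connectedComponent
    (isClosed_eq hfA continuous_const) (isClosed_eq hfA continuous_const) hbridge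
  set S₁ := Subtype.val '' W ∪ {y | v ≤ f y}
  set S₂ := Subtype.val '' Wᶜ ∪ {y | f y ≤ u}
  have hcover : univ ⊆ S₁ ∪ S₂ := by
    intro y _
    by_cases hyu : f y ≤ u
    · exact .inr (.inr hyu)
    by_cases hvy : v ≤ f y
    · exact .inl (.inr hvy)
    have hyA : y ∈ A := ⟨(not_le.mp hyu).le, (not_le.mp hvy).le⟩
    by_cases hyW : (⟨y, hyA⟩ : A) ∈ W
    · exact .inl (.inl ⟨_, hyW, rfl⟩)
    · exact .inr (.inl ⟨_, hyW, rfl⟩)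
  have hclosed := hA.isClosedMap_subtype_val
  obtain ⟨y, -, hy₁, hy₂⟩ := isPreconnected_closed_iff.mp isPreconnected_univ S₁ S₂
    ((hclosed _ hW.isClosed).union (isClosed_le continuous_const hf))
    ((hclosed _ hW.compl.isClosed).union (isClosed_le hf continuous_const))
    hcover ⟨q, trivial, .inr hq.le⟩ ⟨p, trivial, .inr hp.le⟩
  exfalso
  rcases hy₁ with ⟨w, hw, rfl⟩ | hvy <;> rcases hy₂ with ⟨w', hw', hww'⟩ | hyu
  · exact hw' (Subtype.val_injective hww' ▸ hw)
  · exact disjoint_left.mp hWFu hw (le_antisymm hyu w.2.1)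
  · exact hw' (hFvW (le_antisymm w'.2.2 (hww' ▸ hvy)))
  · exact huv.not_ge (hvy.trans hyu)

theorem IsCompact.exists_isConnected_subset_image_eq_Icc {X : Type*} [TopologicalSpace X]
    [T2Space X] {K : Set X} (hK : IsCompact K) (hKc : IsPreconnected K) {f : X → ℝ}
    (hf : ContinuousOn f K) {u v : ℝ} (huv : u < v) {p q : X} (hp : p ∈ K) (hq : q ∈ K)
    (hpu : f p < u) (hvq : v < f q) :
    ∃ D ⊆ K, IsCompact D ∧ IsConnected D ∧ f '' D = Icc u v := by
  have : CompactSpace K := isCompact_iff_compactSpace.mp hK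
  have : PreconnectedSpace K := Subtype.preconnectedSpace hKc
  obtain ⟨D, hDc, hDconn, hfD⟩ := exists_isConnected_image_eq_Icc hf.domRestrict huv
    (p := ⟨p, hp⟩) (q := ⟨q, hq⟩) hpu hvq
  refine ⟨Subtype.val '' D, Subtype.coe_image_subset K D, hDc.image continuous_subtype_val,
    hDconn.image _ continuous_subtype_val.continuousOn, ?_⟩
  rw [image_image]
  exact hfD

theorem IsCompact.exists_isConnected_subset_image_subset_interior {X : Type*}
    [TopologicalSpace X] [T2Space X] {K : Set X} (hK : IsCompact K) (hKc : IsConnected K)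
    {f : X → ℝ} (hf : ContinuousOn f K) (hnd : (f '' K).Nontrivial) {ε : ℝ} (hε : 0 < ε) :
    ∃ D ⊆ K, IsCompact D ∧ IsConnected D ∧ f '' D ⊆ interior (f '' K) ∧
      Metric.diam (f '' K) - ε ≤ Metric.diam (f '' D) := by
  have hImg := eq_Icc_of_connected_compact (hKc.image f hf) (hK.image_of_continuousOn hf)
  set c := sInf (f '' K)
  set d := sSup (f '' K)
  have hcd : c < d := by
    obtain ⟨a, ha, b, hb, hab⟩ := hnd.exists_lt
    rw [hImg] at ha hb
    exact ha.1.trans_lt (hab.trans_le hb.2)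
  obtain ⟨p, hp, hpc⟩ : c ∈ f '' K := hImg ▸ left_mem_Icc.mpr hcd.le
  obtain ⟨q, hq, hqd⟩ : d ∈ f '' K := hImg ▸ right_mem_Icc.mpr hcd.le
  obtain ⟨δ, hδ, hδε, hδcd⟩ : ∃ δ : ℝ, 0 < δ ∧ 2 * δ ≤ ε ∧ 3 * δ ≤ d - c :=
    ⟨min ε (d - c) / 3, by positivity, by linarith [min_le_left ε (d - c)],
      by linarith [min_le_right ε (d - c)]⟩
  obtain ⟨D, hDK, hDc, hDconn, hfD⟩ := hK.exists_isConnected_subset_image_eq_Icc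
    hKc.isPreconnected hf (u := c + δ) (v := d - δ) (by linarith) hp hq (by linarith)
    (by linarith)
  refine ⟨D, hDK, hDc, hDconn, ?_, ?_⟩
  · rw [hfD, hImg, interior_Icc]
    exact Icc_subset_Ioo (by linarith) (by linarith)
  · rw [hfD, hImg, Real.diam_Icc hcd.le, Real.diam_Icc (by linarith)]
    linarith

theorem continuous_projPerp (t : ℝ) : Continuous (projPerp t) :=
  Complex.continuous_re.comp (continuous_mul_const _)

open Complex in
theorem projPerp_eq_im (t : ℝ) (z : ℂ) : projPerp t z = (z * exp (-(t * Real.pi * I))).im := by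
  rw [projPerp, show -((t + 1 / 2) * Real.pi * I) = -(t * Real.pi * I) + -Real.pi / 2 * I by ring,
    exp_add, exp_neg_pi_div_two_mul_I, ← mul_assoc]
  simp

open Complex in
theorem strip_eq_setOf_projPerp (x t : ℝ) {μ : ℝ} (hμ : μ ≠ 0) (j : ℤ) :
    Strip x t μ j = {z | projPerp t z / μ - x ∈ Icc (j : ℝ) (j + 1)} := by
  have he : exp (t * Real.pi * I) * exp (-(t * Real.pi * I)) = 1 := by
    rw [← exp_add, add_neg_cancel, exp_zero]
  have hμ' : (μ : ℂ) ≠ 0 := ofReal_ne_zero.mpr hμ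
  rw [Strip, image_eq_preimage_of_inverse (g := fun w => w * exp (-(t * Real.pi * I)) / μ - x * I)]
  · ext w
    simp [hStrip, projPerp_eq_im]
  · intro z
    dsimp only
    field_simp
    linear_combination (z + x * I) * he
  · intro w
    dsimp only
    field_simp
    linear_combination w * he

theorem exists_subcontinuum_in_interior_general
    {X : Type*} [MetricSpace X] [CompactSpace X]
    (γ : X → ℂ) (hγ : Continuous γ)
    (x t μ : ℝ) (hμ : μ ∈ Ioc (0:ℝ) 1)
    (j : ℤ) (p : X) (hp : p ∈ γ ⁻¹' Strip x t μ j)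
    (C : Set X) (hC : C = connectedComponentIn (γ ⁻¹' Strip x t μ j) p)
    (hnd : (projPerp t '' (γ '' C)).Nontrivial)
    (ε : ℝ) (hε : 0 < ε) :
    ∃ D : Set X, D ⊆ C ∧ IsCompact D ∧ IsConnected D ∧
      γ '' D ⊆ interior (Strip x t μ j) ∧
      normT t (γ '' C) - ε ≤ normT t (γ '' D) := by
  set S : Set ℝ := {s | s / μ - x ∈ Icc (j : ℝ) (j + 1)}
  have hS : Strip x t μ j = projPerp t ⁻¹' S := strip_eq_setOf_projPerp x t hμ.1.ne' j
  have hF : IsClosed (γ ⁻¹' Strip x t μ j) := by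
    rw [hS]
    exact ((isClosed_Icc.preimage (by fun_prop)).preimage (continuous_projPerp t)).preimage hγ
  have hCF : C ⊆ γ ⁻¹' Strip x t μ j := hC ▸ connectedComponentIn_subset _ _
  have hCconn : IsConnected C := hC ▸ isConnected_connectedComponentIn_iff.mpr hp
  have : CompactSpace (γ ⁻¹' Strip x t μ j) := isCompact_iff_compactSpace.mp hF.isCompact
  have hCc : IsCompact C := by
    rw [hC, connectedComponentIn_eq_image hp]
    exact isClosed_connectedComponent.isCompact.image continuous_subtype_val
  obtain ⟨D, hDC, hDc, hDconn, hDint, hDdiam⟩ :=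
    hCc.exists_isConnected_subset_image_subset_interior hCconn (f := projPerp t ∘ γ)
      ((continuous_projPerp t).comp hγ).continuousOn (by rwa [image_comp]) hε
  refine ⟨D, hDC, hDc, hDconn, ?_, ?_⟩
  · rintro _ ⟨w, hw, rfl⟩
    rw [hS]
    apply preimage_interior_subset_interior_preimage (continuous_projPerp t)
    exact interior_mono (image_subset_iff (f := projPerp t ∘ γ).mpr (by rwa [hS] at hCF)) (hDint ⟨w, hw, rfl⟩)
  · rw [normT, normT, image_image, image_image]
    exact hDdiam

/-- **Lemma 2.2.** Let `γ : X → ℂ` be a generalized path and let `C` be a connected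
component of `γ⁻¹(S^{x,t,μ}_j)` whose image under `proj⊥_t` is non-degenerate.  Then for
every `ε > 0` there is a subcontinuum `D ⊆ C` with `γ(D)` contained in the interior of
`S^{x,t,μ}_j` and `‖γ(D)‖_t ≥ ‖γ(C)‖_t - ε`. -/
theorem exists_subcontinuum_in_interior
    {X : Type*} [MetricSpace X] [CompactSpace X] [ConnectedSpace X] [LocallyConnectedSpace X]
    (γ : X → ℂ) (hγ : Continuous γ)
    (x t μ : ℝ) (hx : x ∈ Icc (0:ℝ) 1) (ht : t ∈ Icc (0:ℝ) 1) (hμ : μ ∈ Ioc (0:ℝ) 1)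
    (j : ℤ) (p : X) (hp : p ∈ γ ⁻¹' Strip x t μ j)
    (C : Set X) (hC : C = connectedComponentIn (γ ⁻¹' Strip x t μ j) p)
    (hnd : (projPerp t '' (γ '' C)).Nontrivial)
    (ε : ℝ) (hε : 0 < ε) :
    ∃ D : Set X, D ⊆ C ∧ IsCompact D ∧ IsConnected D ∧
      γ '' D ⊆ interior (Strip x t μ j) ∧
      normT t (γ '' C) - ε ≤ normT t (γ '' D) :=
  exists_subcontinuum_in_interior_general γ hγ x t μ hμ j p hp C hC hnd ε hε
end
end

section
/- Let γ : X → ℂ be a generalized path, let {q_k}_{k=0}^∞ be a countable dense subset of X, and for k ≠ l and j ∈ ℤ let B_{kl}^j be the set of all (x,t,μ) ∈ [0,1] × [0,1] × (0,1] such that there exists a subcontinuum C ⊆ γ⁻¹(S^{x,t,μ}_j) with q_k, q_l ∈ C, and every such subcontinuum C satisfies γ(C) ∩ ∂S^{x,t,μ}_j ≠ ∅. Then the set B = ⋃_{k≠l, j∈ℤ} B_{kl}^j has Lebesgue measure zero. -/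
open Set MeasureTheory

noncomputable section

/-!
Write `u_t(z) = Im (z e^{-tπi})`, so that `S^{x,t,μ}_j` is the band `s ≤ u_t ≤ s + μ` with
`s = μ (j + x)`. For points `a, c` of `X` and fixed `t`, let `F(s)` be the infimum of the `b` such
that `a` and `c` lie in one component of `γ⁻¹ {s ≤ u_t ≤ b}`. If `(x, t, μ)` is bad for `a, c, j`,
then `F(s) ≤ s + μ ≤ F(s⁺)`, since no continuum through `a` and `c` fits in a strictly narrower
band. As `F` is monotone, `F(s) = F(s⁺)` off a countable set, and there `μ = F(s) - s` is determined
by `s`; Fubini makes the bad set null. Measurability comes from the upper semicontinuity of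
components of compact sets: the relation "linked in the band `[s, b]`" is closed in `(t, s, b)`.
-/

open Filter Topology

section ConnectedComponentIn

variable {X : Type*} [TopologicalSpace X]

theorem IsCompact.isCompact_connectedComponentIn {F : Set X} (hF : IsCompact F) (x : X) :
    IsCompact (connectedComponentIn F x) := by
  by_cases hx : x ∈ F
  · have : CompactSpace F := isCompact_iff_compactSpace.mp hF
    rw [connectedComponentIn_eq_image hx]
    exact isClosed_connectedComponent.isCompact.image continuous_subtype_val
  · simp [connectedComponentIn_eq_empty hx]

theorem IsCompact.mem_connectedComponentIn_iff {F : Set X} (hF : IsCompact F) {a c : X} :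
    c ∈ connectedComponentIn F a ↔
      ∃ C, IsCompact C ∧ IsConnected C ∧ C ⊆ F ∧ a ∈ C ∧ c ∈ C := by
  refine ⟨fun hc => ?_, fun ⟨C, _, hC, hCF, haC, hcC⟩ =>
    hC.isPreconnected.subset_connectedComponentIn haC hCF hcC⟩
  have ha : a ∈ F := connectedComponentIn_nonempty_iff.mp ⟨c, hc⟩
  exact ⟨_, hF.isCompact_connectedComponentIn a, isConnected_connectedComponentIn_iff.mpr ha,
    connectedComponentIn_subset F a, mem_connectedComponentIn ha, hc⟩

variable [T2Space X]

theorem IsCompact.exists_isClopen_of_notMem_connectedComponentIn {K : Set X} (hK : IsCompact K)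
    {a c : X} (ha : a ∈ K) (hc : c ∉ connectedComponentIn K a) :
    ∃ Q : Set K, IsClopen Q ∧ ⟨a, ha⟩ ∈ Q ∧ c ∉ (↑) '' Q := by
  have : CompactSpace K := isCompact_iff_compactSpace.mp hK
  by_contra! h
  obtain ⟨⟨c, hcK⟩, -, rfl⟩ := h univ isClopen_univ (mem_univ _)
  rw [connectedComponentIn_eq_image ha] at hc
  refine hc ⟨⟨c, hcK⟩, ?_, rfl⟩
  rw [connectedComponent_eq_iInter_isClopen, mem_iInter]
  rintro ⟨Q, hQ, haQ⟩
  obtain ⟨_, hcQ, hc⟩ := h Q hQ haQ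
  rwa [Subtype.ext hc] at hcQ

theorem IsCompact.exists_open_separation_of_notMem_connectedComponentIn {K : Set X}
    (hK : IsCompact K) {a c : X} (ha : a ∈ K) (hc : c ∉ connectedComponentIn K a) :
    ∃ U V : Set X, IsOpen U ∧ IsOpen V ∧ Disjoint U V ∧ K ⊆ U ∪ V ∧ a ∈ U ∧ c ∈ V := by
  have : CompactSpace K := isCompact_iff_compactSpace.mp hK
  obtain ⟨Q, hQ, haQ, hcQ⟩ := hK.exists_isClopen_of_notMem_connectedComponentIn ha hc
  have hdisj : Disjoint ((↑) '' Q : Set X) (insert c ((↑) '' Qᶜ)) :=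
    disjoint_insert_right.mpr
      ⟨hcQ, disjoint_image_of_injective Subtype.val_injective disjoint_compl_right⟩
  obtain ⟨U, V, hU, hV, hQU, hQV, hUV⟩ := SeparatedNhds.of_isCompact_isCompact
    (hQ.isClosed.isCompact.image continuous_subtype_val)
    ((hQ.compl.isClosed.isCompact.image continuous_subtype_val).insert c) hdisj
  refine ⟨U, V, hU, hV, hUV, fun x hx => ?_, hQU ⟨_, haQ, rfl⟩, hQV (mem_insert c _)⟩
  by_cases hxQ : (⟨x, hx⟩ : K) ∈ Q
  · exact Or.inl (hQU ⟨_, hxQ, rfl⟩)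
  · exact Or.inr (hQV (mem_insert_of_mem c ⟨_, hxQ, rfl⟩))

end ConnectedComponentIn

section Slices

variable {Y X : Type*} [TopologicalSpace Y] [TopologicalSpace X] [CompactSpace X]

theorem IsClosed.eventually_nhds_preimage_subset {Z : Set (Y × X)} (hZ : IsClosed Z) {W : Set X}
    (hW : IsOpen W) {y₀ : Y} (h : Prod.mk y₀ ⁻¹' Z ⊆ W) :
    ∀ᶠ y in 𝓝 y₀, Prod.mk y ⁻¹' Z ⊆ W := by
  have hclosed : IsClosed (Prod.fst '' (Z ∩ univ ×ˢ Wᶜ)) :=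
    isClosedMap_fst_of_compactSpace _ (hZ.inter (isClosed_univ.prod hW.isClosed_compl))
  filter_upwards [hclosed.isOpen_compl.mem_nhds fun ⟨⟨_, x⟩, ⟨hx, _, hxW⟩, hy⟩ =>
    hxW (h (hy ▸ hx))] with y hy x hx
  by_contra hxW
  exact hy ⟨(y, x), ⟨hx, mem_univ _, hxW⟩, rfl⟩

theorem IsClosed.isClosed_setOf_mem_connectedComponentIn [T2Space X] {Z : Set (Y × X)}
    (hZ : IsClosed Z) (a c : X) :
    IsClosed {y | c ∈ connectedComponentIn (Prod.mk y ⁻¹' Z) a} := by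
  refine isOpen_compl_iff.mp (isOpen_iff_eventually.mpr fun y₀ hy₀ => ?_)
  by_cases ha : a ∈ Prod.mk y₀ ⁻¹' Z
  · have hK : IsCompact (Prod.mk y₀ ⁻¹' Z) := (hZ.preimage (Continuous.prodMk_right y₀)).isCompact
    obtain ⟨U, V, hU, hV, hUV, hZUV, haU, hcV⟩ :=
      hK.exists_open_separation_of_notMem_connectedComponentIn ha hy₀
    filter_upwards [hZ.eventually_nhds_preimage_subset (hU.union hV) hZUV] with y hy hc
    have hsub : connectedComponentIn (Prod.mk y ⁻¹' Z) a ⊆ U :=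
      isPreconnected_connectedComponentIn.subset_left_of_subset_union hU hV hUV
        ((connectedComponentIn_subset _ _).trans hy)
        ⟨a, mem_connectedComponentIn (connectedComponentIn_nonempty_iff.mp ⟨c, hc⟩), haU⟩
    exact hUV.ne_of_mem (hsub hc) hcV rfl
  · filter_upwards [(hZ.isOpen_compl.preimage (Continuous.prodMk_left a)).mem_nhds ha]
      with y hy (hc : c ∈ connectedComponentIn (Prod.mk y ⁻¹' Z) a)
    exact hy (connectedComponentIn_nonempty_iff (F := Prod.mk y ⁻¹' Z).mp ⟨c, hc⟩)

end Slices

/-- `⊤` if `R s b` holds for no `b`. Only rational `b` are used, to keep the infimum countable. -/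
def threshold (R : ℝ → ℝ → Prop) (s : ℝ) : EReal :=
  ⨅ (b : ℚ) (_ : R s b), ((b : ℝ) : EReal)

/-- The right limit `F(s⁺)` when `F` is monotone. -/
def rightInf (F : ℝ → EReal) (s : ℝ) : EReal :=
  ⨅ (r : ℚ) (_ : s < r), F r

section Threshold

variable {R : ℝ → ℝ → Prop}

theorem threshold_le {s b : ℝ} (hR : Monotone (R s)) (h : R s b) : threshold R s ≤ b := by
  refine le_of_forall_gt_imp_ge_of_dense fun e he => ?_
  obtain ⟨r, hbr, hre⟩ := EReal.exists_rat_btwn_of_lt he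
  exact (iInf₂_le r (hR (EReal.coe_lt_coe_iff.mp hbr).le h)).trans hre.le

theorem threshold_mono (hR : Antitone R) : Monotone (threshold R) :=
  fun _ _ hss' => le_iInf₂ fun b hb => iInf₂_le b (hR hss' b hb)

theorem le_rightInf_threshold {s b : ℝ} (h : ∀ s' b', s < s' → b' < b → ¬ R s' b') :
    (b : EReal) ≤ rightInf (threshold R) s :=
  le_iInf₂ fun r hr => le_iInf₂ fun b' hb' =>
    EReal.coe_le_coe_iff.mpr (not_lt.mp fun hlt => h r b' hr hlt hb')

theorem measurable_threshold {T : Type*} [MeasurableSpace T] {R : T → ℝ → ℝ → Prop}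
    (hR : ∀ b, MeasurableSet {w : T × ℝ | R w.1 w.2 b}) :
    Measurable fun w : T × ℝ => threshold (R w.1) w.2 := by
  classical
  simp only [threshold, iInf_eq_if]
  exact .iInf fun b => .ite (hR b) measurable_const measurable_const

end Threshold

section RightInf

variable {F : ℝ → EReal}

theorem monotone_rightInf : Monotone (rightInf F) :=
  fun _ _ hss' => le_iInf₂ fun r hr => iInf₂_le r (hss'.trans_lt hr)

theorem Monotone.countable_setOf_lt_rightInf (hF : Monotone F) :
    {s | F s < rightInf F s}.Countable := by
  have hsub : {s | F s < rightInf F s} ⊆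
      ⋃ q : ℚ, {s | F s < ((q : ℝ) : EReal) ∧ ((q : ℝ) : EReal) < rightInf F s} :=
    fun s hs => mem_iUnion.mpr (EReal.exists_rat_btwn_of_lt hs)
  refine .mono hsub (countable_iUnion fun q => Subsingleton.countable ?_)
  have hle : ∀ s₁ s₂, s₁ < s₂ → rightInf F s₁ ≤ F s₂ := fun s₁ s₂ h => by
    obtain ⟨r, h₁, h₂⟩ := exists_rat_btwn h
    exact (iInf₂_le r h₁).trans (hF h₂.le)
  intro s₁ hs₁ s₂ hs₂
  by_contra hne
  rcases lt_or_gt_of_ne hne with h | h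
  · exact (hs₁.2.trans_le (hle _ _ h)).not_gt hs₂.1
  · exact (hs₂.2.trans_le (hle _ _ h)).not_gt hs₁.1

theorem measurable_rightInf {T : Type*} [MeasurableSpace T] {F : T → ℝ → EReal}
    (hF : Measurable (Function.uncurry F)) :
    Measurable fun w : T × ℝ => rightInf (F w.1) w.2 := by
  classical
  simp only [rightInf, iInf_eq_if]
  exact .iInf fun r => .ite (measurableSet_lt measurable_snd measurable_const)
    (hF.comp (measurable_fst.prodMk measurable_const)) measurable_const

theorem Monotone.ae_volume_setOf_le_add_le_rightInf (hF : Monotone F) :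
    ∀ᵐ μ : ℝ, volume {s | F s ≤ ↑(s + μ) ∧ ↑(s + μ) ≤ rightInf F s} = 0 := by
  set E : Set (ℝ × ℝ) := {p | F p.2 ≤ ↑(p.2 + p.1) ∧ ↑(p.2 + p.1) ≤ rightInf F p.2}
  have hE : MeasurableSet E :=
    (measurableSet_le (hF.measurable.comp measurable_snd)
        (measurable_coe_real_ereal.comp (measurable_snd.add measurable_fst))).inter
      (measurableSet_le (measurable_coe_real_ereal.comp (measurable_snd.add measurable_fst))
        (monotone_rightInf.measurable.comp measurable_snd))
  suffices h : (volume : Measure ℝ).prod volume E = 0 by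
    filter_upwards [Measure.measure_ae_null_of_prod_null h] with μ hμ using hμ
  rw [Measure.prod_apply_symm hE]
  refine (lintegral_congr_ae ?_).trans lintegral_zero
  filter_upwards [hF.countable_setOf_lt_rightInf.ae_notMem (volume : Measure ℝ)] with s hs
  refine Subsingleton.measure_zero (fun μ₁ h₁ μ₂ h₂ => ?_) volume
  have hFs : rightInf F s ≤ F s := not_lt.mp hs
  have e₁ : ((s + μ₁ : ℝ) : EReal) = F s := le_antisymm (h₁.2.trans hFs) h₁.1
  have e₂ : ((s + μ₂ : ℝ) : EReal) = F s := le_antisymm (h₂.2.trans hFs) h₂.1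
  simpa using EReal.coe_injective (e₁.trans e₂.symm)

end RightInf

theorem volume_preimage_mul_add_eq_zero {S : Set ℝ} (hS : volume S = 0) {μ : ℝ} (hμ : μ ≠ 0)
    (c : ℝ) : volume ((fun x => μ * (c + x)) ⁻¹' S) = 0 := by
  change volume ((fun x => c + x) ⁻¹' ((fun y => μ * y) ⁻¹' S)) = 0
  rw [measure_preimage_add, Real.volume_preimage_mul_left hμ, hS, mul_zero]

theorem volume_setOf_mem_of_mul_add_eq_zero {E : Set (ℝ × ℝ × ℝ)} (hE : MeasurableSet E)
    (h : ∀ᵐ t, ∀ᵐ μ, volume {s | (t, μ, s) ∈ E} = 0) (c : ℝ) :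
    volume {P : ℝ × ℝ × ℝ | P.2.2 ≠ 0 ∧ (P.2.1, P.2.2, P.2.2 * (c + P.1)) ∈ E} = 0 := by
  set E' : Set (ℝ × ℝ × ℝ) := {w | w.2.1 ≠ 0 ∧ (w.1, w.2.1, w.2.1 * (c + w.2.2)) ∈ E}
  have hE' : MeasurableSet E' :=
    ((MeasurableSet.singleton 0).compl.preimage (measurable_fst.comp measurable_snd)).inter
      (hE.preimage (by fun_prop))
  have h' : volume E' = 0 := by
    rw [Measure.volume_eq_prod]
    refine Measure.measure_prod_null_of_ae_null hE' ?_
    filter_upwards [h] with t ht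
    rw [Pi.zero_apply, Measure.volume_eq_prod]
    refine Measure.measure_prod_null_of_ae_null (hE'.preimage measurable_prodMk_left) ?_
    filter_upwards [ht] with μ hμ
    rcases eq_or_ne μ 0 with rfl | hμ0
    · simp [E']
    · exact measure_mono_null (fun x hx => hx.2) (volume_preimage_mul_add_eq_zero hμ hμ0 c)
  have hpres : MeasurePreserving (MeasurableEquiv.prodComm.trans MeasurableEquiv.prodAssoc :
      ℝ × ℝ × ℝ ≃ᵐ ℝ × ℝ × ℝ) volume volume :=
    volume_preserving_prodAssoc.comp Measure.measurePreserving_swap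
  rwa [← hpres.measure_preimage_equiv] at h'

def stripCoord (t : ℝ) (z : ℂ) : ℝ := (z * Complex.exp (-((t : ℂ) * Real.pi * Complex.I))).im

def band (t s b : ℝ) : Set ℂ := stripCoord t ⁻¹' Icc s b

theorem continuous_stripCoord : Continuous fun p : ℝ × ℂ => stripCoord p.1 p.2 := by
  unfold stripCoord; fun_prop

theorem isClosed_band (t s b : ℝ) : IsClosed (band t s b) :=
  isClosed_Icc.preimage (continuous_stripCoord.comp (Continuous.prodMk_right t))

theorem Strip_eq_band {x t μ : ℝ} (hμ : 0 < μ) (j : ℤ) :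
    Strip x t μ j = band t (μ * (j + x)) (μ * (j + x) + μ) := by
  set w : ℂ := μ * Complex.exp ((t : ℂ) * Real.pi * Complex.I)
  have hw : w ≠ 0 := mul_ne_zero (by exact_mod_cast hμ.ne') (Complex.exp_ne_zero _)
  have him (z : ℂ) : (z / w - x * Complex.I).im = stripCoord t z / μ - x := by
    simp [w, stripCoord, div_eq_mul_inv, ← Complex.exp_neg, Complex.mul_im,
      ← Complex.ofReal_inv]
    ring
  ext z
  have hmem : z ∈ Strip x t μ j ↔ z / w - x * Complex.I ∈ hStrip j :=
    ⟨by rintro ⟨v, hv, rfl⟩; rwa [mul_div_cancel_left₀ _ hw, add_sub_cancel_right],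
      fun h => ⟨_, h, show w * _ = z by rw [sub_add_cancel, mul_div_cancel₀ _ hw]⟩⟩
  simp only [hmem, hStrip, band, Set.mem_ofPred_eq, mem_preimage, him, mem_Icc, le_sub_iff_add_le,
    sub_le_iff_le_add, le_div_iff₀ hμ, div_le_iff₀ hμ]
  constructor <;> rintro ⟨h₁, h₂⟩ <;> constructor <;> linarith

theorem notMem_frontier_band {t s b : ℝ} {z : ℂ} (hz : stripCoord t z ∈ Ioo s b) :
    z ∉ frontier (band t s b) := by
  have hopen : IsOpen (stripCoord t ⁻¹' Ioo s b) :=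
    isOpen_Ioo.preimage (continuous_stripCoord.comp (Continuous.prodMk_right t))
  exact disjoint_interior_frontier.notMem_of_mem_left
    (interior_maximal (preimage_mono Ioo_subset_Icc_self) hopen hz)

section Linking

variable {X : Type*} [TopologicalSpace X] {γ : X → ℂ} {a c : X}

def BandLinked (γ : X → ℂ) (a c : X) (t s b : ℝ) : Prop :=
  c ∈ connectedComponentIn (γ ⁻¹' band t s b) a

theorem BandLinked.mono {t s b s' b' : ℝ} (h : BandLinked γ a c t s' b') (hs : s ≤ s')
    (hb : b' ≤ b) : BandLinked γ a c t s b :=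
  connectedComponentIn_mono a (preimage_mono (preimage_mono (Icc_subset_Icc hs hb))) h

theorem isClosed_setOf_bandLinked [CompactSpace X] [T2Space X] (hγ : Continuous γ) :
    IsClosed {w : ℝ × ℝ × ℝ | BandLinked γ a c w.1 w.2.1 w.2.2} := by
  have hu : Continuous fun q : (ℝ × ℝ × ℝ) × X => stripCoord q.1.1 (γ q.2) :=
    continuous_stripCoord.comp (continuous_fst.fst.prodMk (hγ.comp continuous_snd))
  have hZ : IsClosed {q : (ℝ × ℝ × ℝ) × X | γ q.2 ∈ band q.1.1 q.1.2.1 q.1.2.2} :=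
    (isClosed_le (by fun_prop) hu).inter (isClosed_le hu (by fun_prop))
  exact hZ.isClosed_setOf_mem_connectedComponentIn a c

def linkThreshold (γ : X → ℂ) (a c : X) (t : ℝ) : ℝ → EReal :=
  threshold (BandLinked γ a c t)

/-- In coordinates `(t, μ, s)`, where `[s, s + μ]` is the band: `F(s) ≤ s + μ ≤ F(s⁺)` for
`F = linkThreshold γ a c t`. -/
def criticalSet (γ : X → ℂ) (a c : X) : Set (ℝ × ℝ × ℝ) :=
  {w | linkThreshold γ a c w.1 w.2.2 ≤ ↑(w.2.2 + w.2.1) ∧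
    ↑(w.2.2 + w.2.1) ≤ rightInf (linkThreshold γ a c w.1) w.2.2}

theorem measurableSet_criticalSet [CompactSpace X] [T2Space X] (hγ : Continuous γ) :
    MeasurableSet (criticalSet γ a c) := by
  have hF : Measurable fun w : ℝ × ℝ => linkThreshold γ a c w.1 w.2 :=
    measurable_threshold fun b => ((isClosed_setOf_bandLinked hγ).preimage
      (continuous_fst.prodMk (continuous_snd.prodMk continuous_const) :
        Continuous fun w : ℝ × ℝ => (w.1, w.2, (b : ℝ)))).measurableSet
  have hproj : Measurable fun w : ℝ × ℝ × ℝ => (w.1, w.2.2) :=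
    measurable_fst.prodMk measurable_snd.snd
  have hsum : Measurable fun w : ℝ × ℝ × ℝ => ((w.2.2 + w.2.1 : ℝ) : EReal) := by fun_prop
  exact (measurableSet_le (hF.comp hproj) hsum).inter
    (measurableSet_le hsum ((measurable_rightInf hF).comp hproj))

theorem ae_volume_criticalSet_section (t : ℝ) :
    ∀ᵐ μ, volume {s | (t, μ, s) ∈ criticalSet γ a c} = 0 := by
  have hR : Antitone (BandLinked γ a c t) := fun _ _ hss' _ h => h.mono hss' le_rfl
  exact (threshold_mono hR).ae_volume_setOf_le_add_le_rightInf

theorem mem_criticalSet [CompactSpace X] (hγ : Continuous γ) {t μ s : ℝ}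
    (hlink : ∃ C : Set X, IsCompact C ∧ IsConnected C ∧ C ⊆ γ ⁻¹' band t s (s + μ) ∧
      a ∈ C ∧ c ∈ C)
    (hfront : ∀ C : Set X, IsCompact C → IsConnected C → C ⊆ γ ⁻¹' band t s (s + μ) →
      a ∈ C → c ∈ C → (γ '' C ∩ frontier (band t s (s + μ))).Nonempty) :
    (t, μ, s) ∈ criticalSet γ a c := by
  have hK (s b : ℝ) : IsCompact (γ ⁻¹' band t s b) := ((isClosed_band t s b).preimage hγ).isCompact
  refine ⟨threshold_le (fun _ _ hbb' h => h.mono le_rfl hbb')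
      ((hK _ _).mem_connectedComponentIn_iff.mpr hlink),
    le_rightInf_threshold fun s' b' hs' hb' h => ?_⟩
  obtain ⟨C, hC, hCconn, hCsub, haC, hcC⟩ := (hK s' b').mem_connectedComponentIn_iff.mp h
  obtain ⟨_, ⟨p, hpC, rfl⟩, hp⟩ := hfront C hC hCconn
    (hCsub.trans (preimage_mono (preimage_mono (Icc_subset_Icc hs'.le hb'.le)))) haC hcC
  exact notMem_frontier_band ⟨hs'.trans_le (hCsub hpC).1, (hCsub hpC).2.trans_lt hb'⟩ hp

end Linking

theorem bad_set_measure_zero_general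
    {X : Type*} [MetricSpace X] [CompactSpace X]
    (γ : X → ℂ) (hγ : Continuous γ)
    (q : ℕ → X) :
    volume {P : ℝ × ℝ × ℝ |
      P.1 ∈ Icc (0:ℝ) 1 ∧ P.2.1 ∈ Icc (0:ℝ) 1 ∧ P.2.2 ∈ Ioc (0:ℝ) 1 ∧
      ∃ (k l : ℕ) (j : ℤ), k ≠ l ∧
        (∃ C : Set X, IsCompact C ∧ IsConnected C ∧ C ⊆ γ ⁻¹' Strip P.1 P.2.1 P.2.2 j ∧
          q k ∈ C ∧ q l ∈ C) ∧
        (∀ C : Set X, IsCompact C → IsConnected C → C ⊆ γ ⁻¹' Strip P.1 P.2.1 P.2.2 j →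
          q k ∈ C → q l ∈ C →
          (γ '' C ∩ frontier (Strip P.1 P.2.1 P.2.2 j)).Nonempty)} = 0 := by
  refine measure_mono_null ?_ <| measure_iUnion_null fun k => measure_iUnion_null fun l =>
    measure_iUnion_null fun j : ℤ => volume_setOf_mem_of_mul_add_eq_zero
      (measurableSet_criticalSet (a := q k) (c := q l) hγ)
      (ae_of_all _ ae_volume_criticalSet_section) j
  rintro P ⟨-, -, hμ, k, l, j, -, hlink, hfront⟩
  rw [Strip_eq_band hμ.1] at hlink hfront
  exact mem_iUnion.mpr ⟨k, mem_iUnion.mpr ⟨l, mem_iUnion.mpr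
    ⟨j, hμ.1.ne', mem_criticalSet hγ hlink hfront⟩⟩⟩

/-- **Claim 3.4.1.** Let `γ : X → ℂ` be a generalized path and `{q_k}` a countable dense
subset of `X`.  For `k ≠ l` and `j ∈ ℤ`, let `B_{kl}^j` be the set of parameters
`(x,t,μ) ∈ [0,1] × [0,1] × (0,1]` such that there exists a subcontinuum
`C ⊆ γ⁻¹(S^{x,t,μ}_j)` containing `q_k` and `q_l`, and every such subcontinuum `C`
satisfies `γ(C) ∩ ∂S^{x,t,μ}_j ≠ ∅`.  Then `B = ⋃_{k≠l, j} B_{kl}^j` has Lebesgue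
measure zero. -/
theorem bad_set_measure_zero
    {X : Type*} [MetricSpace X] [CompactSpace X] [ConnectedSpace X] [LocallyConnectedSpace X]
    (γ : X → ℂ) (hγ : Continuous γ)
    (q : ℕ → X) (hq : DenseRange q) :
    volume {P : ℝ × ℝ × ℝ |
      P.1 ∈ Icc (0:ℝ) 1 ∧ P.2.1 ∈ Icc (0:ℝ) 1 ∧ P.2.2 ∈ Ioc (0:ℝ) 1 ∧
      ∃ (k l : ℕ) (j : ℤ), k ≠ l ∧
        (∃ C : Set X, IsCompact C ∧ IsConnected C ∧ C ⊆ γ ⁻¹' Strip P.1 P.2.1 P.2.2 j ∧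
          q k ∈ C ∧ q l ∈ C) ∧
        (∀ C : Set X, IsCompact C → IsConnected C → C ⊆ γ ⁻¹' Strip P.1 P.2.1 P.2.2 j →
          q k ∈ C → q l ∈ C →
          (γ '' C ∩ frontier (Strip P.1 P.2.1 P.2.2 j)).Nonempty)} = 0 :=
  bad_set_measure_zero_general γ hγ q
end
end
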